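/- The diameter of the graph D_k(S_a, S_b) (i.e., the maximum of d(u,v) over all pairs of vertices u, v) is at least 5 if and only if there exists an index 0 ≤ i ≤ k−1 with S_a(i) = 1 and S_b(i) = 1; equivalently, if for every i either S_a(i) = 0 or S_b(i) = 0, then d(u,v) ≤ 4 for all vertices u, v. -/

import Mathlib

/-!
Every vertex except the `r_i` is within distance 2 of `a`, and every vertex except the `ℓ_i` is
within distance 2 of `b`, so only pairs `ℓ_i, r_{i'}` can be far apart. For `i ≠ i'` a bit `j` on
which `i` and `i'` differ gives a path `ℓ_i – f_j – t'_j – r_{i'}` (or `ℓ_i – t_j – f'_j – r_{i'}`)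
of length 3, and an extra edge at `ℓ_i` or at `r_i` gives a path of length 4 through
`ℓ_{k+1} – r_{k+1}`. Without either extra edge, a potential that changes by at most one along each
edge and drops from 5 at `ℓ_i` to 0 at `r_i` shows `d(ℓ_i, r_i) ≥ 5`.
-/

namespace DiamGadget

/-- Vertices of the diameter gadget graph `D_k`, `k = 2^m`. -/
inductive V (m : ℕ) : Type
  | L : Fin (2 ^ m) → V m
  | R : Fin (2 ^ m) → V m
  | lk : V m
  | lk1 : V m
  | rk : V m
  | rk1 : V m
  | F : Fin m → V m
  | T : Fin m → V m
  | F' : Fin m → V m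
  | T' : Fin m → V m
  | a : V m
  | b : V m

open V

/-- One direction of the edge relation of `D_k`. -/
def rel (m : ℕ) : V m → V m → Prop
  | L _, lk => True
  | R _, rk => True
  | lk, lk1 => True
  | rk, rk1 => True
  | lk1, rk1 => True
  | F j, T' j' => j = j'
  | T j, F' j' => j = j'
  | L i, F j => Nat.testBit i.val j.val = false
  | L i, T j => Nat.testBit i.val j.val = true
  | R i, F' j => Nat.testBit i.val j.val = false
  | R i, T' j => Nat.testBit i.val j.val = true
  | a, F _ => True
  | a, T _ => True
  | a, lk => True
  | a, lk1 => True
  | b, F' _ => True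
  | b, T' _ => True
  | b, rk => True
  | b, rk1 => True
  | a, b => True
  | _, _ => False

/-- The diameter gadget graph `D_k`. -/
def G (m : ℕ) : SimpleGraph (V m) := SimpleGraph.fromRel (rel m)

/-- Extra edges depending on the input strings: `ℓ_i–ℓ_{k+1}` when `S_a(i) = 0`
and `r_i–r_{k+1}` when `S_b(i) = 0`. -/
def extraRel (m : ℕ) (Sa Sb : Fin (2 ^ m) → Bool) : V m → V m → Prop
  | L i, lk1 => Sa i = false
  | R i, rk1 => Sb i = false
  | _, _ => False

/-- The graph `D_k(S_a, S_b)`. -/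
def GS (m : ℕ) (Sa Sb : Fin (2 ^ m) → Bool) : SimpleGraph (V m) :=
  G m ⊔ SimpleGraph.fromRel (extraRel m Sa Sb)

end DiamGadget

theorem Nat.exists_lt_testBit_ne_of_lt_two_pow {m a b : ℕ} (ha : a < 2 ^ m) (hb : b < 2 ^ m)
    (hab : a ≠ b) : ∃ j < m, a.testBit j ≠ b.testBit j := by
  obtain ⟨j, hj⟩ := Nat.exists_testBit_ne_of_ne hab
  refine ⟨j, ?_, hj⟩
  by_contra! hmj
  have hpow := Nat.pow_le_pow_right two_pos hmj
  exact hj ((Nat.testBit_lt_two_pow (ha.trans_le hpow)).trans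
    (Nat.testBit_lt_two_pow (hb.trans_le hpow)).symm)

namespace SimpleGraph

variable {W : Type*} {G : SimpleGraph W}

theorem dist_le_length_add_length {w u v : W} (p : G.Walk w u) (q : G.Walk w v) :
    G.dist u v ≤ p.length + q.length := by
  simpa using G.dist_le (p.reverse.append q)

theorem Walk.sub_le_length {f : W → ℤ} (hf : ∀ ⦃u v⦄, G.Adj u v → f u ≤ f v + 1) {u v : W}
    (p : G.Walk u v) : f u - f v ≤ p.length := by
  induction p with
  | nil => simp
  | cons h _ ih =>
    have := hf h
    push_cast [length_cons]
    omega

theorem Reachable.sub_le_dist {f : W → ℤ} (hf : ∀ ⦃u v⦄, G.Adj u v → f u ≤ f v + 1) {u v : W}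
    (h : G.Reachable u v) : f u - f v ≤ G.dist u v := by
  obtain ⟨p, hp⟩ := h.exists_walk_length_eq_dist
  exact hp ▸ p.sub_le_length hf

end SimpleGraph

namespace DiamGadget

open V

variable {m : ℕ} {Sa Sb : Fin (2 ^ m) → Bool} {i : Fin (2 ^ m)}

theorem adj_of_rel {u v : V m} (hne : u ≠ v) (h : rel m u v) : (GS m Sa Sb).Adj u v :=
  Or.inl ⟨hne, Or.inl h⟩

theorem adj_of_extraRel {u v : V m} (hne : u ≠ v) (h : extraRel m Sa Sb u v) :
    (GS m Sa Sb).Adj u v :=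
  Or.inr ⟨hne, Or.inl h⟩

section Adjacency

variable (m Sa Sb)

theorem adj_a_b : (GS m Sa Sb).Adj a b := adj_of_rel (by simp) trivial
theorem adj_a_lk : (GS m Sa Sb).Adj a lk := adj_of_rel (by simp) trivial
theorem adj_a_lk1 : (GS m Sa Sb).Adj a lk1 := adj_of_rel (by simp) trivial
theorem adj_b_rk : (GS m Sa Sb).Adj b rk := adj_of_rel (by simp) trivial
theorem adj_b_rk1 : (GS m Sa Sb).Adj b rk1 := adj_of_rel (by simp) trivial
theorem adj_lk_lk1 : (GS m Sa Sb).Adj lk lk1 := adj_of_rel (by simp) trivial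
theorem adj_rk_rk1 : (GS m Sa Sb).Adj rk rk1 := adj_of_rel (by simp) trivial
theorem adj_lk1_rk1 : (GS m Sa Sb).Adj lk1 rk1 := adj_of_rel (by simp) trivial
theorem adj_L_lk (i : Fin (2 ^ m)) : (GS m Sa Sb).Adj (L i) lk := adj_of_rel (by simp) trivial
theorem adj_R_rk (i : Fin (2 ^ m)) : (GS m Sa Sb).Adj (R i) rk := adj_of_rel (by simp) trivial
theorem adj_a_F (j : Fin m) : (GS m Sa Sb).Adj a (F j) := adj_of_rel (by simp) trivial
theorem adj_a_T (j : Fin m) : (GS m Sa Sb).Adj a (T j) := adj_of_rel (by simp) trivial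
theorem adj_b_F' (j : Fin m) : (GS m Sa Sb).Adj b (F' j) := adj_of_rel (by simp) trivial
theorem adj_b_T' (j : Fin m) : (GS m Sa Sb).Adj b (T' j) := adj_of_rel (by simp) trivial
theorem adj_F_T' (j : Fin m) : (GS m Sa Sb).Adj (F j) (T' j) := adj_of_rel (by simp) rfl
theorem adj_T_F' (j : Fin m) : (GS m Sa Sb).Adj (T j) (F' j) := adj_of_rel (by simp) rfl

variable {m Sa Sb} {j : Fin m}

theorem adj_L_F (h : i.val.testBit j = false) : (GS m Sa Sb).Adj (L i) (F j) :=
  adj_of_rel (by simp) h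
theorem adj_L_T (h : i.val.testBit j = true) : (GS m Sa Sb).Adj (L i) (T j) :=
  adj_of_rel (by simp) h
theorem adj_R_F' (h : i.val.testBit j = false) : (GS m Sa Sb).Adj (R i) (F' j) :=
  adj_of_rel (by simp) h
theorem adj_R_T' (h : i.val.testBit j = true) : (GS m Sa Sb).Adj (R i) (T' j) :=
  adj_of_rel (by simp) h
theorem adj_L_lk1 (h : Sa i = false) : (GS m Sa Sb).Adj (L i) lk1 := adj_of_extraRel (by simp) h
theorem adj_R_rk1 (h : Sb i = false) : (GS m Sa Sb).Adj (R i) rk1 := adj_of_extraRel (by simp) h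

end Adjacency

open SimpleGraph.Walk

def V.isL : V m → Bool
  | L _ => true
  | _ => false

def V.isR : V m → Bool
  | R _ => true
  | _ => false

theorem exists_walk_a_length_le_two {v : V m} (hv : v.isR = false) :
    ∃ p : (GS m Sa Sb).Walk a v, p.length ≤ 2 := by
  cases v with
  | L i => exact ⟨cons (adj_a_lk ..) (cons (adj_L_lk ..).symm nil), le_rfl⟩
  | R i => cases hv
  | lk => exact ⟨cons (adj_a_lk ..) nil, by simp⟩
  | lk1 => exact ⟨cons (adj_a_lk1 ..) nil, by simp⟩
  | rk => exact ⟨cons (adj_a_b ..) (cons (adj_b_rk ..) nil), le_rfl⟩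
  | rk1 => exact ⟨cons (adj_a_b ..) (cons (adj_b_rk1 ..) nil), le_rfl⟩
  | F j => exact ⟨cons (adj_a_F ..) nil, by simp⟩
  | T j => exact ⟨cons (adj_a_T ..) nil, by simp⟩
  | F' j => exact ⟨cons (adj_a_T ..) (cons (adj_T_F' ..) nil), le_rfl⟩
  | T' j => exact ⟨cons (adj_a_F ..) (cons (adj_F_T' ..) nil), le_rfl⟩
  | a => exact ⟨nil, by simp⟩
  | b => exact ⟨cons (adj_a_b ..) nil, by simp⟩

theorem exists_walk_b_length_le_two {v : V m} (hv : v.isL = false) :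
    ∃ p : (GS m Sa Sb).Walk b v, p.length ≤ 2 := by
  cases v with
  | L i => cases hv
  | R i => exact ⟨cons (adj_b_rk ..) (cons (adj_R_rk ..).symm nil), le_rfl⟩
  | lk => exact ⟨cons (adj_a_b ..).symm (cons (adj_a_lk ..) nil), le_rfl⟩
  | lk1 => exact ⟨cons (adj_a_b ..).symm (cons (adj_a_lk1 ..) nil), le_rfl⟩
  | rk => exact ⟨cons (adj_b_rk ..) nil, by simp⟩
  | rk1 => exact ⟨cons (adj_b_rk1 ..) nil, by simp⟩
  | F j => exact ⟨cons (adj_a_b ..).symm (cons (adj_a_F ..) nil), le_rfl⟩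
  | T j => exact ⟨cons (adj_a_b ..).symm (cons (adj_a_T ..) nil), le_rfl⟩
  | F' j => exact ⟨cons (adj_b_F' ..) nil, by simp⟩
  | T' j => exact ⟨cons (adj_b_T' ..) nil, by simp⟩
  | a => exact ⟨cons (adj_a_b ..).symm nil, by simp⟩
  | b => exact ⟨nil, by simp⟩

theorem dist_le_four_of_isR_eq_false {u v : V m} (hu : u.isR = false) (hv : v.isR = false) :
    (GS m Sa Sb).dist u v ≤ 4 := by
  obtain ⟨p, hp⟩ := exists_walk_a_length_le_two (Sa := Sa) (Sb := Sb) hu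
  obtain ⟨q, hq⟩ := exists_walk_a_length_le_two (Sa := Sa) (Sb := Sb) hv
  have := SimpleGraph.dist_le_length_add_length p q
  omega

theorem dist_le_four_of_isL_eq_false {u v : V m} (hu : u.isL = false) (hv : v.isL = false) :
    (GS m Sa Sb).dist u v ≤ 4 := by
  obtain ⟨p, hp⟩ := exists_walk_b_length_le_two (Sa := Sa) (Sb := Sb) hu
  obtain ⟨q, hq⟩ := exists_walk_b_length_le_two (Sa := Sa) (Sb := Sb) hv
  have := SimpleGraph.dist_le_length_add_length p q
  omega

theorem dist_L_R_le_three_of_ne {i i' : Fin (2 ^ m)} (h : i ≠ i') :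
    (GS m Sa Sb).dist (L i) (R i') ≤ 3 := by
  obtain ⟨j, hjm, hj⟩ :=
    Nat.exists_lt_testBit_ne_of_lt_two_pow i.isLt i'.isLt (Fin.val_ne_of_ne h)
  let J : Fin m := ⟨j, hjm⟩
  cases hi : i.val.testBit j
  · have hi' : i'.val.testBit J = true := by simpa [hi] using hj.symm
    exact (SimpleGraph.dist_le <| cons (adj_L_F (j := J) hi) <| cons (adj_F_T' ..) <|
      cons (adj_R_T' hi').symm nil).trans_eq rfl
  · have hi' : i'.val.testBit J = false := by simpa [hi] using hj.symm
    exact (SimpleGraph.dist_le <| cons (adj_L_T (j := J) hi) <| cons (adj_T_F' ..) <|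
      cons (adj_R_F' hi').symm nil).trans_eq rfl

theorem dist_L_R_le_four (hS : Sa i = false ∨ Sb i = false) :
    (GS m Sa Sb).dist (L i) (R i) ≤ 4 := by
  rcases hS with hSa | hSb
  · exact (SimpleGraph.dist_le <| cons (adj_L_lk1 hSa) <| cons (adj_lk1_rk1 ..) <|
      cons (adj_rk_rk1 ..).symm <| cons (adj_R_rk ..).symm nil).trans_eq rfl
  · exact (SimpleGraph.dist_le <| cons (adj_L_lk ..) <| cons (adj_lk_lk1 ..) <|
      cons (adj_lk1_rk1 ..) <| cons (adj_R_rk1 hSb).symm nil).trans_eq rfl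

theorem dist_le_four (hS : ∀ i, Sa i = false ∨ Sb i = false) (u v : V m) :
    (GS m Sa Sb).dist u v ≤ 4 := by
  have hLR (i i' : Fin (2 ^ m)) : (GS m Sa Sb).dist (L i) (R i') ≤ 4 := by
    obtain rfl | h := eq_or_ne i i'
    · exact dist_L_R_le_four (hS i)
    · exact (dist_L_R_le_three_of_ne h).trans (by norm_num)
  cases u <;> cases v <;> first
    | exact dist_le_four_of_isR_eq_false rfl rfl
    | exact dist_le_four_of_isL_eq_false rfl rfl
    | exact hLR _ _
    | exact (SimpleGraph.dist_comm ..).trans_le (hLR _ _)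

-- When `S_a(i) = S_b(i) = 1`, `potential i v` is the distance from `v` to `r_i`.
def potential (i : Fin (2 ^ m)) : V m → ℤ
  | L i' => if i' = i then 5 else 3
  | R i' => if i' = i then 0 else 2
  | lk => 4
  | lk1 => 3
  | rk => 1
  | rk1 => 2
  | F j => if i.val.testBit j then 2 else 4
  | T j => if i.val.testBit j then 4 else 2
  | F' j => if i.val.testBit j then 3 else 1
  | T' j => if i.val.testBit j then 1 else 3
  | a => 3
  | b => 2

theorem potential_le_of_adj (hSa : Sa i = true) (hSb : Sb i = true)
    ⦃u v : V m⦄ (h : (GS m Sa Sb).Adj u v) : potential i u ≤ potential i v + 1 := by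
  obtain ⟨-, h | h⟩ | ⟨-, h | h⟩ := h <;> cases u <;> cases v <;>
    simp_all [rel, extraRel, potential] <;> split_ifs <;> simp_all

theorem five_le_dist_L_R (hSa : Sa i = true) (hSb : Sb i = true) :
    5 ≤ (GS m Sa Sb).dist (L i) (R i) := by
  have hreach : (GS m Sa Sb).Reachable (L i) (R i) :=
    ⟨cons (adj_L_lk ..) <| cons (adj_lk_lk1 ..) <| cons (adj_lk1_rk1 ..) <|
      cons (adj_rk_rk1 ..).symm <| cons (adj_R_rk ..).symm nil⟩
  have := hreach.sub_le_dist (potential_le_of_adj hSa hSb)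
  simp only [potential, if_true] at this
  omega

theorem statement4_general (m : ℕ) (Sa Sb : Fin (2 ^ m) → Bool) :
    ((∃ u v : V m, 5 ≤ (GS m Sa Sb).dist u v) ↔
      (∃ i : Fin (2 ^ m), Sa i = true ∧ Sb i = true)) ∧
    ((∀ i : Fin (2 ^ m), Sa i = false ∨ Sb i = false) →
      ∀ u v : V m, (GS m Sa Sb).dist u v ≤ 4) := by
  refine ⟨⟨fun ⟨u, v, h5⟩ => ?_, fun ⟨i, hSa, hSb⟩ => ⟨L i, R i, five_le_dist_L_R hSa hSb⟩⟩,
    dist_le_four⟩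
  by_contra! hS
  have hS' (i : Fin (2 ^ m)) : Sa i = false ∨ Sb i = false := by
    cases h : Sa i <;> simp_all
  exact absurd (dist_le_four hS' u v) (by omega)

theorem statement4 (m : ℕ) (hm : 1 ≤ m) (Sa Sb : Fin (2 ^ m) → Bool) :
    ((∃ u v : V m, 5 ≤ (GS m Sa Sb).dist u v) ↔
      (∃ i : Fin (2 ^ m), Sa i = true ∧ Sb i = true)) ∧
    ((∀ i : Fin (2 ^ m), Sa i = false ∨ Sb i = false) →
      ∀ u v : V m, (GS m Sa Sb).dist u v ≤ 4) :=
  statement4_general m Sa Sb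

end DiamGadget
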